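/- arXiv:2208.07982 — 5 statements merged into one kernel-verified Lean document; each statement's English description precedes it below -/
import Mathlib

section
/- Let G be a finite simple graph on a vertex set V with n = |V| ≥ 3. Let H = (S, C) be the hypergraph with vertex set S = ZMod n and hyperedge set C = { {i, i+1} : i ∈ ZMod n }. Then there exists a bijection f : ZMod n → V such that for every hyperedge {i, i+1} ∈ C the subgraph of G induced by {f(i), f(i+1)} is connected, if and only if G has a Hamiltonian cycle. -/
/-!
Two distinct vertices induce a connected subgraph exactly when they are adjacent, and `f i ≠ f (i + 1)`
by injectivity, so the left side asks for a bijection `ZMod n → V` sending consecutive residues to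
adjacent vertices. Such a map is a copy of `cycleGraph n` in `G`, and since `n = |V|`, a cycle of
length `n` in `G` is precisely a Hamiltonian cycle.
-/

open SimpleGraph

namespace SimpleGraph

variable {V : Type*} {G : SimpleGraph V}

theorem induce_pair_connected_iff {u v : V} (huv : u ≠ v) :
    (G.induce {u, v}).Connected ↔ G.Adj u v := by
  refine ⟨fun h ↦ ?_, induce_pair_connected_of_adj⟩
  obtain ⟨p⟩ := h.preconnected ⟨u, by simp⟩ ⟨v, by simp⟩
  obtain ⟨d, -, hfst, hsnd⟩ :=
    p.exists_boundary_dart {⟨u, by simp⟩} rfl (by simpa using huv.symm)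
  obtain ⟨⟨⟨x, hx⟩, ⟨y, hy⟩⟩, hxy⟩ := d
  simp only [Set.mem_singleton_iff, Subtype.mk.injEq] at hfst hsnd
  subst hfst
  obtain rfl : y = v := by simpa [hsnd] using hy
  exact hxy

theorem exists_isHamiltonianCycle_iff_cycleGraph_isContained [Fintype V] [DecidableEq V]
    (hV : 2 < Fintype.card V) :
    (∃ (a : V) (p : G.Walk a a), p.IsHamiltonianCycle) ↔ cycleGraph (Fintype.card V) ⊑ G := by
  simp_rw [Walk.isHamiltonianCycle_iff_isCycle_and_length_eq, cycleGraph_isContained_iff hV]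

theorem cycleGraph_isContained_iff_exists_injective_adj_add_one {m : ℕ} :
    cycleGraph (m + 2) ⊑ G ↔
      ∃ f : Fin (m + 2) → V, f.Injective ∧ ∀ i, G.Adj (f i) (f (i + 1)) := by
  refine ⟨fun ⟨e⟩ ↦ ⟨e, e.injective, fun i ↦ e.toHom.map_adj ?_⟩,
    fun ⟨f, hf, hadj⟩ ↦ ⟨⟨⟨f, ?_⟩, hf⟩⟩⟩
  · simp [cycleGraph_adj]
  · rintro u v (h | h) <;> rw [sub_eq_iff_eq_add'] at h <;> subst h
    exacts [(hadj v).symm, hadj u]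

end SimpleGraph

/-- Embedding the cycle hypergraph on `ZMod n` into a graph `G` on `n ≥ 3`
vertices (each hyperedge `{i, i+1}` inducing a connected subgraph) is equivalent to
`G` having a Hamiltonian cycle. -/
theorem stmt0 {V : Type*} [Fintype V] [DecidableEq V] (G : SimpleGraph V)
    (n : ℕ) (hn : n = Fintype.card V) (h3 : 3 ≤ n) :
    (∃ f : ZMod n → V, Function.Bijective f ∧
        ∀ i : ZMod n, (G.induce ({f i, f (i + 1)} : Set V)).Connected) ↔
      ∃ (a : V) (p : G.Walk a a), p.IsHamiltonianCycle := by
  rw [exists_isHamiltonianCycle_iff_cycleGraph_isContained (by omega), ← hn]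
  obtain ⟨m, rfl⟩ : ∃ m, n = m + 2 := ⟨n - 2, by omega⟩
  -- `ZMod (m + 2)` is `Fin (m + 2)` by definition.
  rw [cycleGraph_isContained_iff_exists_injective_adj_add_one]
  refine exists_congr fun f ↦ ?_
  rw [Fintype.bijective_iff_injective_and_card, ZMod.card, eq_true hn, and_true]
  refine and_congr_right fun hf ↦ forall_congr' fun i ↦ induce_pair_connected_iff <|
    hf.ne <| left_ne_add.mpr (one_ne_zero : (1 : Fin (m + 2)) ≠ 0)
end

section
/- Let G = (V, E) be a finite simple graph, let T ⊆ V, and let c ∈ T. Suppose there exists a function y : V × V → ℕ such that: (i) y(u, v) = 0 whenever {u, v} is not an edge of G; (ii) for every v ∈ T \ {c}, the net outflow Σ_w y(v, w) − Σ_u y(u, v) equals 1; (iii) for v = c, the net outflow Σ_w y(c, w) − Σ_u y(u, c) equals 1 − |T|; (iv) for every v ∉ T, Σ_w y(v, w) − Σ_u y(u, v) = 0 and Σ_u y(u, v) = 0. Then the subgraph of G induced by T is connected. -/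
/-- Feasibility of Shirabe's single-commodity flow constraints forces the
region `T` to be contiguous, i.e., the subgraph of `G` induced by `T` is connected. -/
theorem stmt1 {V : Type*} [Fintype V] [DecidableEq V] (G : SimpleGraph V)
    (T : Finset V) (c : V) (hc : c ∈ T) (y : V → V → ℕ)
    (h0 : ∀ u v : V, ¬ G.Adj u v → y u v = 0)
    (h1 : ∀ v ∈ T, v ≠ c → (∑ w : V, (y v w : ℤ)) - ∑ u : V, (y u v : ℤ) = 1)
    (h2 : (∑ w : V, (y c w : ℤ)) - ∑ u : V, (y u c : ℤ) = 1 - (T.card : ℤ))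
    (h3 : ∀ v : V, v ∉ T →
      ((∑ w : V, (y v w : ℤ)) - ∑ u : V, (y u v : ℤ) = 0 ∧ ∑ u : V, y u v = 0)) :
    (G.induce (T : Set V)).Connected := by
  classical
  set H := G.induce (T : Set V) with hH
  -- S : vertices of T that reach c in the induced graph
  set S : Finset V :=
    T.filter (fun v => ∃ hv : v ∈ (T : Set V), H.Reachable ⟨v, hv⟩ ⟨c, hc⟩) with hSdef
  have hcS : c ∈ S := Finset.mem_filter.mpr ⟨hc, ⟨hc, SimpleGraph.Reachable.refl _⟩⟩
  have key : T ⊆ S := by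
    by_contra hsub
    set A : Finset V := T \ S with hAdef
    have hA : A.Nonempty := Finset.sdiff_nonempty.mpr hsub
    have hcA : c ∉ A := by simp [hAdef, hcS]
    have hAT : ∀ v ∈ A, v ∈ T := fun v hv => (Finset.mem_sdiff.mp hv).1
    -- sum of net flow over A equals |A| ≥ 1
    have hsum : ∑ v ∈ A, ((∑ w : V, (y v w : ℤ)) - ∑ u : V, (y u v : ℤ)) = A.card := by
      rw [Finset.sum_congr rfl (fun v hv => h1 v (hAT v hv)
        (by rintro rfl; exact hcA hv))]
      simp
    -- split each inner sum into A and Aᶜ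
    have hout : ∀ v : V, (∑ w : V, (y v w : ℤ)) =
        (∑ w ∈ A, (y v w : ℤ)) + ∑ w ∈ Aᶜ, (y v w : ℤ) :=
      fun v => (Finset.sum_add_sum_compl A _).symm
    have hin : ∀ v : V, (∑ u : V, (y u v : ℤ)) =
        (∑ u ∈ A, (y u v : ℤ)) + ∑ u ∈ Aᶜ, (y u v : ℤ) :=
      fun v => (Finset.sum_add_sum_compl A _).symm
    have hswap : ∑ v ∈ A, ∑ w ∈ A, (y v w : ℤ) = ∑ v ∈ A, ∑ u ∈ A, (y u v : ℤ) :=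
      Finset.sum_comm
    have hmain : (∑ v ∈ A, ∑ w ∈ Aᶜ, (y v w : ℤ)) - ∑ v ∈ A, ∑ u ∈ Aᶜ, (y u v : ℤ)
        = A.card := by
      calc (∑ v ∈ A, ∑ w ∈ Aᶜ, (y v w : ℤ)) - ∑ v ∈ A, ∑ u ∈ Aᶜ, (y u v : ℤ)
          = ∑ v ∈ A, ((∑ w : V, (y v w : ℤ)) - ∑ u : V, (y u v : ℤ)) := by
            simp only [hout, hin, Finset.sum_sub_distrib, Finset.sum_add_distrib]
            rw [hswap]; ring
        _ = A.card := hsum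
    have hpos : 0 < ∑ v ∈ A, ∑ w ∈ Aᶜ, (y v w : ℤ) := by
      have h1' : (0 : ℤ) ≤ ∑ v ∈ A, ∑ u ∈ Aᶜ, (y u v : ℤ) := by positivity
      have h2' : (0 : ℤ) < A.card := by
        exact_mod_cast Finset.card_pos.mpr hA
      omega
    -- get a positive flow term crossing the boundary
    have : ∃ v ∈ A, ∃ w ∈ Aᶜ, y v w ≠ 0 := by
      by_contra hctr
      push_neg at hctr
      have : ∑ v ∈ A, ∑ w ∈ Aᶜ, (y v w : ℤ) = 0 := by
        apply Finset.sum_eq_zero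
        intro v hv
        apply Finset.sum_eq_zero
        intro w hw
        simp [hctr v hv w hw]
      omega
    obtain ⟨v, hvA, w, hwA, hyvw⟩ := this
    have hadj : G.Adj v w := by
      by_contra hna
      exact hyvw (h0 v w hna)
    have hwT : w ∈ T := by
      by_contra hwT
      have := (h3 w hwT).2
      have : y v w = 0 := by
        have := Finset.sum_eq_zero_iff.mp this v (Finset.mem_univ v)
        exact this
      exact hyvw this
    have hwS : w ∈ S := by
      have : w ∉ A := by simpa using hwA
      rcases Finset.mem_sdiff.mp (show v ∈ T \ S from hvA) with _
      by_contra hwS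
      exact this (Finset.mem_sdiff.mpr ⟨hwT, hwS⟩)
    obtain ⟨hwT', hreach⟩ := (Finset.mem_filter.mp hwS).2
    have hvT : v ∈ T := hAT v hvA
    have hadjH : H.Adj ⟨v, hvT⟩ ⟨w, hwT'⟩ := by
      simp [hH, SimpleGraph.comap]
      exact hadj
    have hvS : v ∈ S := Finset.mem_filter.mpr ⟨hvT, ⟨hvT, hadjH.reachable.trans hreach⟩⟩
    exact (Finset.mem_sdiff.mp hvA).2 hvS
  -- conclude connectivity
  rw [SimpleGraph.connected_iff]
  refine ⟨?_, ⟨⟨c, hc⟩⟩⟩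
  intro x z
  have hx : ∃ hv : (x : V) ∈ (T : Set V), H.Reachable ⟨x, hv⟩ ⟨c, hc⟩ :=
    (Finset.mem_filter.mp (key x.2)).2
  have hz : ∃ hv : (z : V) ∈ (T : Set V), H.Reachable ⟨z, hv⟩ ⟨c, hc⟩ :=
    (Finset.mem_filter.mp (key z.2)).2
  obtain ⟨hx1, hx2⟩ := hx
  obtain ⟨hz1, hz2⟩ := hz
  have ex : x = ⟨(x : V), hx1⟩ := Subtype.ext rfl
  have ez : z = ⟨(z : V), hz1⟩ := Subtype.ext rfl
  rw [ex, ez]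
  exact hx2.trans hz2.symm
end

section
/- Let G = (V, E) be a finite simple graph, let T ⊆ V be nonempty, and let c ∈ T. If the subgraph of G induced by T is connected, then there exists a function y : V × V → ℕ such that: (i) y(u, v) = 0 unless {u, v} is an edge of G with both u ∈ T and v ∈ T; (ii) y(u, v) ≤ |T| − 1 for all u, v; (iii) for every v ∈ T \ {c}, the net outflow Σ_w y(v, w) − Σ_u y(u, v) equals 1; (iv) for v = c, the net outflow Σ_w y(c, w) − Σ_u y(u, c) equals 1 − |T|; and (v) for every v ∉ T, Σ_u y(u, v) = 0 and Σ_w y(v, w) = 0. -/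
open SimpleGraph

private lemma dart_flow {W V : Type*} [DecidableEq V] {H : SimpleGraph W} {a b : W}
    (q : H.Walk a b) (f : W → V) (v : V) :
    ((q.darts.filter (fun d => f d.toProd.1 = v)).length : ℤ)
      - ((q.darts.filter (fun d => f d.toProd.2 = v)).length : ℤ)
    = (if f a = v then 1 else 0) - (if f b = v then 1 else 0) := by
  induction q with
  | nil => simp
  | @cons x x' y h q ih =>
    simp only [SimpleGraph.Walk.darts_cons, List.filter_cons]
    by_cases h1 : f x = v <;> by_cases h2 : f x' = v <;>
      simp [h1, h2] at ih ⊢ <;> omega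

private lemma sum_filter_split {α V : Type*} [Fintype V] [DecidableEq V]
    (l : List α) (q : α → Prop) [DecidablePred q] (g : α → V) :
    ∑ w : V, (l.filter (fun d => q d ∧ g d = w)).length
      = (l.filter (fun d => q d)).length := by
  induction l with
  | nil => simp
  | cons a l ih =>
    have step : ∀ w : V, (List.filter (fun d => decide (q d ∧ g d = w)) (a :: l)).length
        = (if q a ∧ g a = w then 1 else 0) + (List.filter (fun d => decide (q d ∧ g d = w)) l).length := by
      intro w
      rw [List.filter_cons]
      by_cases h : q a ∧ g a = w <;> simp [h, Nat.add_comm]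
    calc ∑ w : V, (List.filter (fun d => decide (q d ∧ g d = w)) (a :: l)).length
        = ∑ w : V, ((if q a ∧ g a = w then 1 else 0)
            + (List.filter (fun d => decide (q d ∧ g d = w)) l).length) :=
          Finset.sum_congr rfl fun w _ => step w
      _ = (∑ w : V, (if q a ∧ g a = w then 1 else 0))
            + ∑ w : V, (List.filter (fun d => decide (q d ∧ g d = w)) l).length :=
          Finset.sum_add_distrib
      _ = (if q a then 1 else 0) + (List.filter (fun d => decide (q d)) l).length := by
          rw [ih]
          congr 1
          by_cases hq : q a
          · simp [hq]
          · simp [hq]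
      _ = (List.filter (fun d => decide (q d)) (a :: l)).length := by
          rw [List.filter_cons]
          by_cases hq : q a <;> simp [hq, Nat.add_comm]

private lemma filter_length_le_one {α : Type*} {l : List α} (hl : l.Nodup) (q : α → Prop)
    [DecidablePred q] (huniq : ∀ x ∈ l, ∀ y ∈ l, q x → q y → x = y) :
    (l.filter (fun d => q d)).length ≤ 1 := by
  rcases hfl : l.filter (fun d => q d) with _ | ⟨x, _ | ⟨y, m⟩⟩
  · simp
  · simp
  · exfalso
    have hnd : (l.filter (fun d => q d)).Nodup := hl.filter _
    rw [hfl] at hnd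
    have hx : x ∈ l.filter (fun d => q d) := by rw [hfl]; simp
    have hy : y ∈ l.filter (fun d => q d) := by rw [hfl]; simp
    rw [List.mem_filter] at hx hy
    have := huniq x hx.1 y hy.1 (by simpa using hx.2) (by simpa using hy.2)
    subst this
    simp at hnd

/-- Every contiguous region `T` (with designated center `c ∈ T`) admits a
feasible integral flow, with values between `0` and `|T| - 1`, supported on edges of `G`
inside `T`, where every vertex of `T` other than `c` has net outflow `1`, the center `c`
has net outflow `1 - |T|`, and vertices outside `T` carry no flow. -/
theorem stmt2 {V : Type*} [Fintype V] [DecidableEq V] (G : SimpleGraph V)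
    (T : Finset V) (hT : T.Nonempty) (c : V) (hc : c ∈ T)
    (hconn : (G.induce (T : Set V)).Connected) :
    ∃ y : V → V → ℕ,
      (∀ u v : V, ¬ (G.Adj u v ∧ u ∈ T ∧ v ∈ T) → y u v = 0) ∧
      (∀ u v : V, y u v ≤ T.card - 1) ∧
      (∀ v ∈ T, v ≠ c → (∑ w : V, (y v w : ℤ)) - ∑ u : V, (y u v : ℤ) = 1) ∧
      ((∑ w : V, (y c w : ℤ)) - ∑ u : V, (y u c : ℤ) = 1 - (T.card : ℤ)) ∧
      (∀ v : V, v ∉ T → (∑ u : V, y u v = 0 ∧ ∑ w : V, y v w = 0)) := by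
  classical
  set S : Set V := (T : Set V) with hS
  have hcS : c ∈ S := by simpa [hS] using hc
  let c0 : ↥S := ⟨c, hcS⟩
  have hc0 : (c0 : V) = c := rfl
  -- choose a path from each vertex of `T` to `c`
  have hreach : ∀ t : ↥S, ((G.induce S).Reachable t c0) := fun t => hconn t c0
  let p : ∀ t : ↥S, (G.induce S).Walk t c0 := fun t => ((hreach t).some.toPath : _).1
  have hp : ∀ t : ↥S, (p t).IsPath := fun t => ((hreach t).some.toPath).2
  let n : ↥S → V → V → ℕ := fun t u v =>
    ((p t).darts.filter (fun d => (d.toProd.1 : V) = u ∧ (d.toProd.2 : V) = v)).length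
  have hdartmem : ∀ (t : ↥S) (d : (G.induce S).Dart), d ∈ (p t).darts →
      G.Adj (d.toProd.1 : V) (d.toProd.2 : V) ∧ (d.toProd.1 : V) ∈ T ∧ (d.toProd.2 : V) ∈ T := by
    intro t d _
    have hadj := d.adj
    rw [comap_adj] at hadj
    exact ⟨hadj, by simpa [hS] using d.toProd.1.2, by simpa [hS] using d.toProd.2.2⟩
  -- the path from `c` to `c` is trivial
  have hpc : (p c0).darts = [] := by
    have := ((p c0).isPath_iff_eq_nil).mp (hp c0)
    rw [this]; rfl
  have hcard : Fintype.card ↥S = T.card := by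
    simp [hS]
  refine ⟨fun u v => ∑ t : ↥S, n t u v, ?_, ?_, ?_, ?_, ?_⟩
  · -- support condition
    intro u v h
    refine Finset.sum_eq_zero fun t _ => ?_
    simp only [n, List.length_eq_zero_iff]
    rw [List.filter_eq_nil_iff]
    intro d hd hqd
    simp only [decide_eq_true_eq] at hqd
    exact h ⟨hqd.1 ▸ hqd.2 ▸ (hdartmem t d hd).1, hqd.1 ▸ (hdartmem t d hd).2.1,
      hqd.2 ▸ (hdartmem t d hd).2.2⟩
  · -- capacity bound
    intro u v
    have hone : ∀ t : ↥S, n t u v ≤ 1 := by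
      intro t
      refine filter_length_le_one ?_ _ ?_
      · exact SimpleGraph.Walk.darts_nodup_of_support_nodup (hp t).support_nodup
      · intro d1 _ d2 _ h1 h2
        apply SimpleGraph.Dart.ext
        have : (d1.toProd.1 : V) = (d2.toProd.1 : V) := by rw [h1.1, h2.1]
        have : d1.toProd.1 = d2.toProd.1 := Subtype.ext this
        have h2' : (d1.toProd.2 : V) = (d2.toProd.2 : V) := by rw [h1.2, h2.2]
        exact Prod.ext this (Subtype.ext h2')
    have hzero : n c0 u v = 0 := by simp [n, hpc]
    calc ∑ t : ↥S, n t u v = ∑ t ∈ Finset.univ.erase c0, n t u v := by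
          rw [← Finset.add_sum_erase _ _ (Finset.mem_univ c0), hzero, zero_add]
      _ ≤ (Finset.univ.erase c0).card • 1 :=
          Finset.sum_le_card_nsmul _ _ 1 (fun t _ => hone t)
      _ = T.card - 1 := by
          rw [Finset.card_erase_of_mem (Finset.mem_univ c0), Finset.card_univ, hcard]
          simp
  · -- net flow conditions: first prove the generic identity
    have key : ∀ v : V, (∑ w : V, ((∑ t : ↥S, n t v w : ℕ) : ℤ))
        - ∑ u : V, ((∑ t : ↥S, n t u v : ℕ) : ℤ)
        = ∑ t : ↥S, ((if (t : V) = v then (1:ℤ) else 0) - (if c = v then 1 else 0)) := by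
      intro v
      have hout : ∑ w : V, ∑ t : ↥S, n t v w
          = ∑ t : ↥S, ((p t).darts.filter (fun d => (d.toProd.1 : V) = v)).length := by
        rw [Finset.sum_comm]
        exact Finset.sum_congr rfl fun t _ =>
          sum_filter_split (p t).darts (fun d => (d.toProd.1 : V) = v)
            (fun d => (d.toProd.2 : V))
      have hin : ∑ u : V, ∑ t : ↥S, n t u v
          = ∑ t : ↥S, ((p t).darts.filter (fun d => (d.toProd.2 : V) = v)).length := by
        rw [Finset.sum_comm]
        refine Finset.sum_congr rfl fun t _ => ?_
        have : ∀ u : V, n t u v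
            = ((p t).darts.filter (fun d => (d.toProd.2 : V) = v ∧ (d.toProd.1 : V) = u)).length := by
          intro u
          simp only [n]
          congr 1
          exact List.filter_congr fun d _ => by simp [and_comm]
        simp only [this]
        exact sum_filter_split (p t).darts (fun d => (d.toProd.2 : V) = v)
          (fun d => (d.toProd.1 : V))
      rw [← Nat.cast_sum, ← Nat.cast_sum, hout, hin]
      push_cast
      rw [← Finset.sum_sub_distrib]
      exact Finset.sum_congr rfl fun t _ => by
        have := dart_flow (p t) (Subtype.val) v
        simpa [hc0] using this
    intro v hv hvc
    rw [key v]
    have hvS : v ∈ S := by simpa [hS] using hv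
    have h1 : ∑ t : ↥S, (if (t : V) = v then (1:ℤ) else 0) = 1 := by
      rw [Fintype.sum_eq_single (⟨v, hvS⟩ : ↥S) (fun t ht => if_neg fun h => ht (Subtype.ext h))]
      simp
    rw [Finset.sum_sub_distrib, h1]
    simp [Ne.symm hvc]
  · -- center
    have key : ∀ v : V, (∑ w : V, ((∑ t : ↥S, n t v w : ℕ) : ℤ))
        - ∑ u : V, ((∑ t : ↥S, n t u v : ℕ) : ℤ)
        = ∑ t : ↥S, ((if (t : V) = v then (1:ℤ) else 0) - (if c = v then 1 else 0)) := by
      intro v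
      have hout : ∑ w : V, ∑ t : ↥S, n t v w
          = ∑ t : ↥S, ((p t).darts.filter (fun d => (d.toProd.1 : V) = v)).length := by
        rw [Finset.sum_comm]
        exact Finset.sum_congr rfl fun t _ =>
          sum_filter_split (p t).darts (fun d => (d.toProd.1 : V) = v)
            (fun d => (d.toProd.2 : V))
      have hin : ∑ u : V, ∑ t : ↥S, n t u v
          = ∑ t : ↥S, ((p t).darts.filter (fun d => (d.toProd.2 : V) = v)).length := by
        rw [Finset.sum_comm]
        refine Finset.sum_congr rfl fun t _ => ?_
        have : ∀ u : V, n t u v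
            = ((p t).darts.filter (fun d => (d.toProd.2 : V) = v ∧ (d.toProd.1 : V) = u)).length := by
          intro u
          simp only [n]
          congr 1
          exact List.filter_congr fun d _ => by simp [and_comm]
        simp only [this]
        exact sum_filter_split (p t).darts (fun d => (d.toProd.2 : V) = v)
          (fun d => (d.toProd.1 : V))
      rw [← Nat.cast_sum, ← Nat.cast_sum, hout, hin]
      push_cast
      rw [← Finset.sum_sub_distrib]
      exact Finset.sum_congr rfl fun t _ => by
        have := dart_flow (p t) (Subtype.val) v
        simpa [hc0] using this
    rw [key c]
    have h1 : ∑ t : ↥S, (if (t : V) = c then (1:ℤ) else 0) = 1 := by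
      rw [Fintype.sum_eq_single (⟨c, hcS⟩ : ↥S) (fun t ht => if_neg fun h => ht (Subtype.ext h))]
      simp
    rw [Finset.sum_sub_distrib, h1]
    simp [Finset.card_univ, hcard]
  · -- vertices outside T
    intro v hv
    have hz : ∀ (t : ↥S) (u : V), n t u v = 0 ∧ n t v u = 0 := by
      intro t u
      constructor <;>
      · simp only [n, List.length_eq_zero_iff]
        rw [List.filter_eq_nil_iff]
        intro d hd hqd
        simp only [decide_eq_true_eq] at hqd
        rcases hdartmem t d hd with ⟨_, hd1, hd2⟩
        first
        | exact hv (hqd.2 ▸ hd2)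
        | exact hv (hqd.1 ▸ hd1)
    constructor <;>
    · refine Finset.sum_eq_zero fun u _ => Finset.sum_eq_zero fun t _ => ?_
      first | exact (hz t u).1 | exact (hz t u).2
end

section
/- Let S be a finite set and let C be a partition of S into nonempty blocks. For every natural number n with |S| ≤ n², there exists an injection f : S → Fin n × Fin n such that for every block B ∈ C, the subgraph of the square grid graph on Fin n × Fin n induced by the image f(B) is connected. -/
/-- The square grid graph on `Fin n × Fin n`: two vertices are adjacent iff they agree in
one coordinate and differ by exactly 1 in the other. -/
def squareGridGraph (n : ℕ) : SimpleGraph (Fin n × Fin n) :=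
  SimpleGraph.fromRel (fun u v =>
    (u.1 = v.1 ∧ (u.2 : ℕ) + 1 = (v.2 : ℕ)) ∨ (u.2 = v.2 ∧ (u.1 : ℕ) + 1 = (v.1 : ℕ)))

open Classical in
/-- There is an injection of `S` into `[0, card S)` such that every block of the
partition maps onto an interval of naturals. -/
lemma exists_convex_embedding {S : Type*} [Fintype S] (C : Set (Set S))
    (hC : Setoid.IsPartition C) :
    ∃ g : S → ℕ, Function.Injective g ∧ (∀ s, g s < Fintype.card S) ∧
      ∀ B ∈ C, ∀ a ∈ g '' B, ∀ b ∈ g '' B, ∀ k, a ≤ k → k ≤ b → k ∈ g '' B := by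
  -- enumerate the blocks
  have hfin : Finite C := Set.Finite.to_subtype (Set.toFinite C)
  set m := Nat.card C with hm
  let e : C ≃ Fin m := Finite.equivFin C
  let blk : Fin m → Set S := fun i => (e.symm i : Set S)
  have hblkC : ∀ i, blk i ∈ C := fun i => (e.symm i).2
  -- block of each element
  choose Bof hBof using fun s => (hC.2 s).exists
  have hBofC : ∀ s, Bof s ∈ C := fun s => (hBof s).1
  have hBofmem : ∀ s, s ∈ Bof s := fun s => (hBof s).2
  let idx : S → Fin m := fun s => e ⟨Bof s, hBofC s⟩
  have hblkidx : ∀ s, blk (idx s) = Bof s := by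
    intro s; simp [blk, idx]
  have hmemidx : ∀ s, s ∈ blk (idx s) := fun s => (hblkidx s) ▸ hBofmem s
  have huniq : ∀ s i, s ∈ blk i → i = idx s := by
    intro s i hsi
    have h1 : blk i = Bof s := by
      obtain ⟨B, _, hu⟩ := hC.2 s
      rw [hu (blk i) ⟨hblkC i, hsi⟩, hu (Bof s) ⟨hBofC s, hBofmem s⟩]
    have : e.symm i = e.symm (idx s) := by
      apply Subtype.ext
      show blk i = blk (idx s)
      rw [h1, hblkidx s]
    simpa using congrArg e this
  -- sizes and offsets
  let k : Fin m → ℕ := fun i => Nat.card (blk i)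
  let ei : ∀ i, blk i ≃ Fin (k i) := fun i => Finite.equivFin (blk i)
  let k' : ℕ → ℕ := fun j => if h : j < m then k ⟨j, h⟩ else 0
  let off : ℕ → ℕ := fun j => ∑ t ∈ Finset.range j, k' t
  have hoffmono : Monotone off := by
    intro a b hab
    exact Finset.sum_le_sum_of_subset (Finset.range_subset_range.2 hab)
  have hoffsucc : ∀ j, off (j + 1) = off j + k' j := by
    intro j; simp [off, Finset.sum_range_succ]
  -- the embedding
  let g : S → ℕ := fun s => off (idx s) + (ei (idx s) ⟨s, hmemidx s⟩ : ℕ)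
  have gval : ∀ (i : Fin m) (x : blk i), g (x : S) = off i + (ei i x : ℕ) := by
    intro i x
    obtain ⟨s, hs⟩ := x
    have hidx : idx s = i := (huniq s i hs).symm
    subst hidx
    rfl
  have hgrange : ∀ (i : Fin m) (x : blk i), off i ≤ g (x : S) ∧ g (x : S) < off i + k i := by
    intro i x
    rw [gval]
    exact ⟨Nat.le_add_right _ _, Nat.add_lt_add_left (ei i x).2 _⟩
  -- total size
  have hsum : off m = Fintype.card S := by
    have h1 : off m = ∑ i : Fin m, k i := by
      rw [show off m = ∑ t ∈ Finset.range m, k' t from rfl, Finset.sum_range]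
      apply Finset.sum_congr rfl
      intro i _
      simp [k']
    have e2 : (Σ i : Fin m, blk i) ≃ S := by
      refine Equiv.ofBijective (fun p => (p.2 : S)) ⟨?_, ?_⟩
      · rintro ⟨i, x, hx⟩ ⟨j, y, hy⟩ h
        simp only at h
        subst h
        have : i = j := by rw [huniq x i hx, huniq x j hy]
        subst this; rfl
      · intro s; exact ⟨⟨idx s, s, hmemidx s⟩, rfl⟩
    have h3 : ∑ i : Fin m, k i = Fintype.card S := by
      have hc := Fintype.card_congr e2
      rw [Fintype.card_sigma] at hc
      rw [← hc]
      apply Finset.sum_congr rfl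
      intro i _
      simp [k, Nat.card_eq_fintype_card]
    rw [h1, h3]
  have hoffk : ∀ i : Fin m, off i + k i ≤ Fintype.card S := by
    intro i
    have h1 : off ((i : ℕ) + 1) = off i + k' i := hoffsucc i
    have h2 : k' (i : ℕ) = k i := by simp [k']
    have h3 : off ((i : ℕ) + 1) ≤ off m := hoffmono i.2
    rw [← hsum]
    omega
  have hgbound : ∀ s, g s < Fintype.card S := by
    intro s
    have h1 : off (idx s) ≤ g s ∧ g s < off (idx s) + k (idx s) :=
      hgrange (idx s) ⟨s, hmemidx s⟩
    have := hoffk (idx s)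
    omega
  -- image of a block is an interval
  have himg : ∀ i, g '' (blk i) = Set.Ico (off i) (off i + k i) := by
    intro i
    ext t
    constructor
    · rintro ⟨s, hs, rfl⟩
      exact ⟨(hgrange i ⟨s, hs⟩).1, (hgrange i ⟨s, hs⟩).2⟩
    · rintro ⟨h1, h2⟩
      have hj : t - off i < k i := by omega
      refine ⟨((ei i).symm ⟨t - off i, hj⟩ : blk i), ((ei i).symm ⟨t - off i, hj⟩).2, ?_⟩
      rw [gval i]
      simp
      omega
  -- injectivity
  have hginj : Function.Injective g := by
    intro s s' h
    have hi : idx s = idx s' := by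
      by_contra hne
      have h1 : off (idx s) ≤ g s ∧ g s < off (idx s) + k (idx s) :=
        hgrange (idx s) ⟨s, hmemidx s⟩
      have h2 : off (idx s') ≤ g s' ∧ g s' < off (idx s') + k (idx s') :=
        hgrange (idx s') ⟨s', hmemidx s'⟩
      rcases lt_or_gt_of_ne (fun hv => hne (Fin.ext hv) : (idx s : ℕ) ≠ (idx s' : ℕ)) with hlt | hlt
      · have ha : off ((idx s : ℕ) + 1) = off (idx s) + k' (idx s) := hoffsucc _
        have hb : k' ((idx s : ℕ)) = k (idx s) := by simp [k']
        have hc : off ((idx s : ℕ) + 1) ≤ off (idx s') := hoffmono hlt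
        omega
      · have ha : off ((idx s' : ℕ) + 1) = off (idx s') + k' (idx s') := hoffsucc _
        have hb : k' ((idx s' : ℕ)) = k (idx s') := by simp [k']
        have hc : off ((idx s' : ℕ) + 1) ≤ off (idx s) := hoffmono hlt
        omega
    set i := idx s' with hidef
    have hxs : s ∈ blk i := hi ▸ hmemidx s
    have hv1 : g s = off i + (ei i ⟨s, hxs⟩ : ℕ) := gval i ⟨s, hxs⟩
    have hv2 : g s' = off i + (ei i ⟨s', hmemidx s'⟩ : ℕ) := gval i ⟨s', hmemidx s'⟩
    have heq : ei i ⟨s, hxs⟩ = ei i ⟨s', hmemidx s'⟩ := Fin.ext (by omega)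
    have := (ei i).injective heq
    exact congrArg Subtype.val this
  refine ⟨g, hginj, hgbound, ?_⟩
  intro B hB a ha b hb t hat htb
  have hBblk : B = blk (e ⟨B, hB⟩) := by simp [blk]
  rw [hBblk, himg] at ha hb ⊢
  simp only [Set.mem_Ico] at ha hb ⊢
  omega

/-- Boustrophedon (snake) enumeration of the `(n+1) × (n+1)` grid. -/
def snk (n t : ℕ) : Fin (n + 1) × Fin (n + 1) :=
  (⟨t / (n + 1) % (n + 1), Nat.mod_lt _ (Nat.succ_pos n)⟩,
   ⟨(if (t / (n + 1)) % 2 = 0 then t % (n + 1) else n - t % (n + 1)) % (n + 1),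
     Nat.mod_lt _ (Nat.succ_pos n)⟩)

lemma snk_inj (n : ℕ) {t t' : ℕ} (ht : t < (n + 1) ^ 2) (ht' : t' < (n + 1) ^ 2)
    (h : snk n t = snk n t') : t = t' := by
  have hpos : 0 < n + 1 := Nat.succ_pos n
  have hq : t / (n + 1) < n + 1 := by
    rw [Nat.div_lt_iff_lt_mul hpos]; rw [pow_two] at ht; exact ht
  have hq' : t' / (n + 1) < n + 1 := by
    rw [Nat.div_lt_iff_lt_mul hpos]; rw [pow_two] at ht'; exact ht'
  have hr : t % (n + 1) < n + 1 := Nat.mod_lt _ hpos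
  have hr' : t' % (n + 1) < n + 1 := Nat.mod_lt _ hpos
  have h1 := congrArg (fun p => ((p.1 : Fin (n+1)) : ℕ)) h
  have h2 := congrArg (fun p => ((p.2 : Fin (n+1)) : ℕ)) h
  simp only [snk] at h1 h2
  rw [Nat.mod_eq_of_lt hq, Nat.mod_eq_of_lt hq'] at h1
  have hd1 := Nat.div_add_mod t (n + 1)
  have hd2 := Nat.div_add_mod t' (n + 1)
  rw [h1] at h2 hd1
  by_cases hp : (t' / (n + 1)) % 2 = 0 <;> simp only [hp, if_true, if_false, reduceIte] at h2
  · rw [Nat.mod_eq_of_lt hr, Nat.mod_eq_of_lt hr'] at h2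
    omega
  · rw [Nat.mod_eq_of_lt (by omega : n - t % (n+1) < n + 1),
        Nat.mod_eq_of_lt (by omega : n - t' % (n+1) < n + 1)] at h2
    omega

lemma snk_adj (n : ℕ) {t : ℕ} (ht : t + 1 < (n + 1) ^ 2) :
    (squareGridGraph (n + 1)).Adj (snk n t) (snk n (t + 1)) := by
  have hpos : 0 < n + 1 := Nat.succ_pos n
  have hq : t / (n + 1) < n + 1 := by
    rw [Nat.div_lt_iff_lt_mul hpos]; rw [pow_two] at ht; omega
  have hr : t % (n + 1) < n + 1 := Nat.mod_lt _ hpos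
  have hd := Nat.div_add_mod t (n + 1)
  rw [squareGridGraph, SimpleGraph.fromRel_adj]
  by_cases hc : t % (n + 1) = n
  · -- end of a row: move to next row, same column
    have h1h : (t + 1) / (n + 1) = t / (n + 1) + 1 ∧ (t + 1) % (n + 1) = 0 :=
      (Nat.div_mod_unique hpos).2 ⟨by rw [Nat.mul_add, Nat.mul_one]; omega, by omega⟩
    have h1 := h1h.1
    have h1' := h1h.2
    have hq1 : (t + 1) / (n + 1) < n + 1 := by
      rw [Nat.div_lt_iff_lt_mul hpos]; rw [pow_two] at ht; omega
    constructor
    · intro hcon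
      have := congrArg (fun p => ((p.1 : Fin (n+1)) : ℕ)) hcon
      simp only [snk, h1] at this
      rw [Nat.mod_eq_of_lt hq, Nat.mod_eq_of_lt (by omega : t / (n+1) + 1 < n + 1)] at this
      omega
    · left; right
      constructor
      · apply Fin.ext
        show (if (t / (n+1)) % 2 = 0 then t % (n + 1) else n - t % (n + 1)) % (n + 1)
            = (if ((t+1) / (n+1)) % 2 = 0 then (t+1) % (n + 1) else n - (t+1) % (n + 1)) % (n + 1)
        rw [h1, h1']
        by_cases hp : (t / (n + 1)) % 2 = 0
        · rw [if_pos hp, if_neg (by omega), hc]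
          simp
        · rw [if_neg hp, if_pos (by omega), hc]
          simp
      · show t / (n+1) % (n+1) + 1 = (t+1) / (n+1) % (n+1)
        rw [h1, Nat.mod_eq_of_lt hq, Nat.mod_eq_of_lt (by omega : t / (n+1) + 1 < n + 1)]
  · -- within a row
    have h1h : (t + 1) / (n + 1) = t / (n + 1) ∧ (t + 1) % (n + 1) = t % (n + 1) + 1 :=
      (Nat.div_mod_unique hpos).2 ⟨by omega, by omega⟩
    have h1 := h1h.1
    have h1' := h1h.2
    have hrow : (snk n t).1 = (snk n (t+1)).1 := by
      apply Fin.ext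
      show t / (n+1) % (n+1) = (t+1) / (n+1) % (n+1)
      rw [h1]
    constructor
    · intro hcon
      have := congrArg (fun p => ((p.2 : Fin (n+1)) : ℕ)) hcon
      simp only [snk, h1, h1'] at this
      by_cases hp : (t / (n + 1)) % 2 = 0 <;> simp only [hp, reduceIte] at this
      · rw [Nat.mod_eq_of_lt hr, Nat.mod_eq_of_lt (by omega : t % (n+1) + 1 < n + 1)] at this
        omega
      · rw [Nat.mod_eq_of_lt (by omega : n - t % (n+1) < n + 1),
            Nat.mod_eq_of_lt (by omega : n - (t % (n+1) + 1) < n + 1)] at this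
        omega
    · by_cases hp : (t / (n + 1)) % 2 = 0
      · left; left
        refine ⟨hrow, ?_⟩
        show (if (t / (n+1)) % 2 = 0 then t % (n + 1) else n - t % (n + 1)) % (n + 1) + 1
            = (if ((t+1) / (n+1)) % 2 = 0 then (t+1) % (n + 1) else n - (t+1) % (n + 1)) % (n + 1)
        rw [h1, h1', if_pos hp, if_pos hp,
          Nat.mod_eq_of_lt hr, Nat.mod_eq_of_lt (by omega : t % (n+1) + 1 < n + 1)]
      · right; left
        refine ⟨hrow.symm, ?_⟩
        show (if ((t+1) / (n+1)) % 2 = 0 then (t+1) % (n + 1) else n - (t+1) % (n + 1)) % (n + 1) + 1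
            = (if (t / (n+1)) % 2 = 0 then t % (n + 1) else n - t % (n + 1)) % (n + 1)
        rw [h1, h1', if_neg hp, if_neg hp,
          Nat.mod_eq_of_lt (by omega : n - t % (n+1) < n + 1),
          Nat.mod_eq_of_lt (by omega : n - (t % (n+1) + 1) < n + 1)]
        omega

/-- Any partition of a finite set `S` with `|S| ≤ n²` can be embedded
injectively into the `n × n` square grid so that every block induces a connected
subgraph of the grid graph. -/
theorem stmt6 {S : Type*} [Fintype S] (C : Set (Set S)) (hC : Setoid.IsPartition C)
    (n : ℕ) (hn : Fintype.card S ≤ n ^ 2) :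
    ∃ f : S → Fin n × Fin n, Function.Injective f ∧
      ∀ B ∈ C, ((squareGridGraph n).induce (f '' B)).Connected := by
  rcases n with _ | m
  · have hS : IsEmpty S := by
      rw [← Fintype.card_eq_zero_iff]
      omega
    refine ⟨fun s => isEmptyElim s, fun a => isEmptyElim a, ?_⟩
    intro B hB
    exact absurd hB ((Set.eq_empty_of_isEmpty B) ▸ hC.1)
  · obtain ⟨g, hginj, hgb, hconv⟩ := exists_convex_embedding C hC
    have hglt : ∀ s, g s < (m + 1) ^ 2 := fun s => lt_of_lt_of_le (hgb s) hn
    set f : S → Fin (m + 1) × Fin (m + 1) := fun s => snk m (g s) with hf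
    refine ⟨f, ?_, ?_⟩
    · intro s s' h
      exact hginj (snk_inj m (hglt s) (hglt s') h)
    · intro B hB
      have hBne : B.Nonempty := Set.nonempty_iff_ne_empty.2 (fun h => hC.1 (h ▸ hB))
      have hTb : ∀ {t : ℕ}, t ∈ g '' B → t < (m + 1) ^ 2 := by
        rintro t ⟨s, _, rfl⟩; exact hglt s
      have hmem : ∀ {t : ℕ}, t ∈ g '' B → snk m t ∈ f '' B := by
        rintro t ⟨s, hs, rfl⟩; exact ⟨s, hs, rfl⟩
      let vert : ∀ t, t ∈ g '' B → ((f '' B) : Set (Fin (m+1) × Fin (m+1))) :=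
        fun t h => ⟨snk m t, hmem h⟩
      have key : ∀ d a (ha : a ∈ g '' B) (hb : a + d ∈ g '' B),
          ((squareGridGraph (m+1)).induce (f '' B)).Reachable (vert a ha) (vert (a+d) hb) := by
        intro d
        induction d with
        | zero => intro a ha hb; exact SimpleGraph.Reachable.refl _
        | succ d ih =>
          intro a ha hb
          have hmid : a + d ∈ g '' B :=
            hconv B hB a ha (a + d + 1) hb (a + d) (by omega) (by omega)
          refine (ih a ha hmid).trans ?_
          have hadj : (squareGridGraph (m+1)).Adj (snk m (a+d)) (snk m (a+d+1)) :=
            snk_adj m (hTb hb)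
          exact SimpleGraph.Adj.reachable
            (show ((squareGridGraph (m+1)).induce (f '' B)).Adj (vert (a+d) hmid)
              (vert (a+d+1) hb) from hadj)
      have main : ∀ a b (ha : a ∈ g '' B) (hb : b ∈ g '' B), a ≤ b →
          ((squareGridGraph (m+1)).induce (f '' B)).Reachable (vert a ha) (vert b hb) := by
        intro a b ha hb hab
        obtain ⟨d, rfl⟩ := Nat.exists_eq_add_of_le hab
        exact key d a ha hb
      rw [SimpleGraph.connected_iff]
      constructor
      · rintro ⟨v, hv⟩ ⟨w, hw⟩
        obtain ⟨s, hs, rfl⟩ := hv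
        obtain ⟨s', hs', rfl⟩ := hw
        have e1 : (⟨f s, ⟨s, hs, rfl⟩⟩ : ((f '' B) : Set _)) = vert (g s) ⟨s, hs, rfl⟩ :=
          Subtype.ext rfl
        have e2 : (⟨f s', ⟨s', hs', rfl⟩⟩ : ((f '' B) : Set _)) = vert (g s') ⟨s', hs', rfl⟩ :=
          Subtype.ext rfl
        rw [e1, e2]
        rcases le_total (g s) (g s') with h | h
        · exact main _ _ ⟨s, hs, rfl⟩ ⟨s', hs', rfl⟩ h
        · exact (main _ _ ⟨s', hs', rfl⟩ ⟨s, hs, rfl⟩ h).symm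
      · obtain ⟨s, hs⟩ := hBne
        exact ⟨⟨f s, ⟨s, hs, rfl⟩⟩⟩
end

section
/- There exists a finite simple graph T that is a tree (connected and acyclic) in which every vertex has degree at most 4, such that there is no injective map f from the vertices of T to ℤ × ℤ with the property that whenever u and v are adjacent in T, the images f(u) and f(v) are at L1-distance 1 in ℤ × ℤ. -/
/-!
Take the ball of radius 2 around a vertex in the 4-regular tree: a root, four children and
twelve grandchildren, 17 vertices in all. A map to `ℤ × ℤ` sending edges to pairs at
L1-distance 1 does not increase distances, so it sends this tree into the L1-ball of radius 2
around the image of the root, which has only 13 points; hence it cannot be injective.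
-/

open SimpleGraph

def l1Dist (p q : ℤ × ℤ) : ℤ := |p.1 - q.1| + |p.2 - q.2|

lemma l1Dist_triangle (p q r : ℤ × ℤ) : l1Dist p r ≤ l1Dist p q + l1Dist q r := by
  unfold l1Dist
  linarith [abs_sub_le p.1 q.1 r.1, abs_sub_le p.2 q.2 r.2]

noncomputable def l1Ball (r : ℕ) : Finset (ℤ × ℤ) :=
  (Finset.Icc (-r : ℤ) r ×ˢ Finset.Icc (-r : ℤ) r).filter fun p => |p.1| + |p.2| ≤ r

lemma card_l1Ball_two : (l1Ball 2).card = 13 := by decide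

lemma sub_mem_l1Ball {p q : ℤ × ℤ} {r : ℕ} (h : l1Dist p q ≤ r) : p - q ∈ l1Ball r := by
  unfold l1Dist at h
  simp only [l1Ball, Finset.mem_filter, Finset.mem_product, Finset.mem_Icc, Prod.fst_sub,
    Prod.snd_sub]
  refine ⟨⟨abs_le.mp ?_, abs_le.mp ?_⟩, h⟩ <;>
    linarith [abs_nonneg (p.1 - q.1), abs_nonneg (p.2 - q.2)]

section

variable {V : Type*} {G : SimpleGraph V} {f : V → ℤ × ℤ}

lemma l1Dist_le_length (hf : ∀ u v, G.Adj u v → l1Dist (f u) (f v) = 1) {u v : V}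
    (p : G.Walk u v) : l1Dist (f u) (f v) ≤ p.length := by
  induction p with
  | nil => simp [l1Dist]
  | @cons u w v h p ih =>
    rw [Walk.length_cons, Nat.cast_succ]
    linarith [l1Dist_triangle (f u) (f w) (f v), hf u w h]

lemma l1Dist_le_dist (hf : ∀ u v, G.Adj u v → l1Dist (f u) (f v) = 1) (hG : G.Connected)
    (u v : V) : l1Dist (f u) (f v) ≤ G.dist u v := by
  obtain ⟨p, hp⟩ := hG.exists_walk_length_eq_dist u v
  exact hp ▸ l1Dist_le_length hf p

theorem card_le_card_l1Ball [Fintype V] (hf : ∀ u v, G.Adj u v → l1Dist (f u) (f v) = 1)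
    (hinj : Function.Injective f) (hG : G.Connected) {c : V} {r : ℕ}
    (hr : ∀ v, G.dist c v ≤ r) : Fintype.card V ≤ (l1Ball r).card := by
  refine Finset.card_le_card_of_injOn (fun v => f v - f c) (fun v _ => ?_) ?_
  · refine sub_mem_l1Ball ((l1Dist_le_dist hf hG v c).trans ?_)
    exact_mod_cast G.dist_comm ▸ hr v
  · intro u _ v _ huv
    exact hinj (sub_left_injective huv)

end

/-- The root is `none`, its children are `some (i, none)` and their children `some (i, some j)`. -/
abbrev TreeVertex := Option (Fin 4 × Option (Fin 3))

def parent : TreeVertex → TreeVertex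
  | some (i, some _) => some (i, none)
  | _ => none

/-- The root is its own parent; `fromRel` discards the resulting loop. -/
def tree : SimpleGraph TreeVertex := SimpleGraph.fromRel fun v w => parent v = w

instance : DecidableRel tree.Adj := inferInstanceAs (DecidableRel (fromRel _).Adj)

lemma parent_parent (v : TreeVertex) : parent (parent v) = none := by
  rcases v with _ | ⟨i, _ | j⟩ <;> rfl

lemma tree_adj_parent {v : TreeVertex} (h : parent v ≠ v) : tree.Adj (parent v) v :=
  (fromRel_adj _ _ _).mpr ⟨h, Or.inr rfl⟩

lemma dist_parent_le_one (v : TreeVertex) : tree.dist (parent v) v ≤ 1 := by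
  by_cases h : parent v = v
  · rw [h, dist_self]; exact zero_le_one
  · exact dist_le (Walk.cons (tree_adj_parent h) Walk.nil)

lemma tree_reachable_parent (v : TreeVertex) : tree.Reachable (parent v) v := by
  by_cases h : parent v = v
  · rw [h]
  · exact (tree_adj_parent h).reachable

lemma tree_connected : tree.Connected := by
  have hroot (v : TreeVertex) : tree.Reachable none v :=
    parent_parent v ▸ (tree_reachable_parent (parent v)).trans (tree_reachable_parent v)
  exact ⟨fun u v => (hroot u).symm.trans (hroot v)⟩

lemma dist_root_le_two (v : TreeVertex) : tree.dist none v ≤ 2 := by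
  calc tree.dist none v ≤ tree.dist (parent (parent v)) (parent v) + tree.dist (parent v) v := by
        rw [parent_parent]; exact tree_connected.dist_triangle
    _ ≤ 2 := by linarith [dist_parent_le_one v, dist_parent_le_one (parent v)]

lemma card_treeVertex : Fintype.card TreeVertex = 17 := rfl

lemma tree_isTree : tree.IsTree := by
  rw [isTree_iff_connected_and_card]
  refine ⟨tree_connected, ?_⟩
  rw [Nat.card_eq_fintype_card, ← edgeFinset_card, Nat.card_eq_fintype_card]
  decide

lemma ncard_neighborSet_tree_le (v : TreeVertex) : (tree.neighborSet v).ncard ≤ 4 := by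
  rw [Set.ncard_eq_toFinset_card']
  revert v
  decide

/-- There exists a finite tree with maximum degree at most 4 that cannot be
embedded as a subgraph into the square grid graph on `ℤ × ℤ` (adjacency = L1-distance 1). -/
theorem stmt10 :
    ∃ (V : Type) (_ : Fintype V) (T : SimpleGraph V),
      T.IsTree ∧ (∀ v : V, (T.neighborSet v).ncard ≤ 4) ∧
      ¬ ∃ f : V → ℤ × ℤ, Function.Injective f ∧
          ∀ u v : V, T.Adj u v →
            |(f u).1 - (f v).1| + |(f u).2 - (f v).2| = 1 := by
  refine ⟨TreeVertex, inferInstance, tree, tree_isTree, ncard_neighborSet_tree_le, ?_⟩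
  rintro ⟨f, hinj, hf⟩
  have hcard := card_le_card_l1Ball hf hinj tree_connected dist_root_le_two
  rw [card_treeVertex, card_l1Ball_two] at hcard
  omega
end
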